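/- For every clause-set F, the hardness of the doped clause-set D(F) equals the maximum of the hardness over all subsets F' ⊆ F: hd(D(F)) = max_{F' ⊆ F} hd(F'). -/
import Mathlib



/-- Literals: a variable (ℕ) with a polarity. -/
abbrev Lit := ℕ × Bool

/-- Complement of a literal. -/
def Lit.comp (x : Lit) : Lit := (x.1, !x.2)

/-- A clause is a finite set of literals. -/
abbrev Clause := Finset Lit

/-- A clause-set (CNF). -/
abbrev ClauseSet := Finset Clause

/-- Complementation of all literals of a clause. -/
def Clause.compl (C : Clause) : Clause := C.image Lit.comp

/-- Value of a literal under a total assignment. -/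
def Lit.eval (a : ℕ → Bool) (x : Lit) : Bool := if x.2 then a x.1 else !(a x.1)

/-- A clause is satisfied by an assignment iff some literal evaluates to true. -/
def Clause.sat (a : ℕ → Bool) (C : Clause) : Prop := ∃ x ∈ C, Lit.eval a x = true

/-- An assignment satisfies a clause-set (as CNF) iff it satisfies every clause. -/
def satisfies (a : ℕ → Bool) (F : ClauseSet) : Prop := ∀ C ∈ F, Clause.sat a C

/-- Semantic entailment of a clause. -/
def entails (F : ClauseSet) (C : Clause) : Prop := ∀ a, satisfies a F → Clause.sat a C

def unsat (F : ClauseSet) : Prop := ¬ ∃ a, satisfies a F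

/-- Logical equivalence of clause-sets. -/
def equivCls (F G : ClauseSet) : Prop := ∀ a, satisfies a F ↔ satisfies a G

/-- Minimally unsatisfiable clause-sets. -/
def minUnsat (F : ClauseSet) : Prop := unsat F ∧ ∀ F' ⊂ F, ¬ unsat F'

/-- A clause is complement-free (no clashing pair). -/
def tautFree (C : Clause) : Prop := ∀ x ∈ C, Lit.comp x ∉ C

/-- F is a minimal premise set for clause C. -/
def mpsFor (F : ClauseSet) (C : Clause) : Prop :=
  tautFree C ∧ entails F C ∧ ∀ F' ⊂ F, ¬ entails F' C

/-- F is a minimal premise set. -/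
def isMps (F : ClauseSet) : Prop := ∃ C, mpsFor F C

/-- C is a prime implicate of F. -/
def primeImp (F : ClauseSet) (C : Clause) : Prop :=
  tautFree C ∧ entails F C ∧ ∀ C' ⊂ C, ¬ entails F C'

/-- The set of all prime implicates of F. -/
def primeSet (F : ClauseSet) : Set Clause := {C | primeImp F C}

/-- The set of literals occurring in F. -/
def lits (F : ClauseSet) : Finset Lit := F.sup id

/-- The pure clause of F: the set of pure literals of F. -/
def pureC (F : ClauseSet) : Clause := (lits F).filter (fun x => Lit.comp x ∉ lits F)

def varsC (C : Clause) : Finset ℕ := C.image Prod.fst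

def vars (F : ClauseSet) : Finset ℕ := F.sup varsC

/-- Partial assignments. -/
abbrev PAssign := ℕ → Option Bool

/-- Value of a literal under a partial assignment. -/
def Lit.pval (φ : PAssign) (x : Lit) : Option Bool :=
  (φ x.1).map (fun b => if x.2 then b else !b)

/-- Removing falsified literals from a clause. -/
def papplyC (φ : PAssign) (C : Clause) : Clause := C.filter (fun x => Lit.pval φ x ≠ some false)

/-- A clause is satisfied by a partial assignment. -/
def csat (φ : PAssign) (C : Clause) : Prop := ∃ x ∈ C, Lit.pval φ x = some true

instance (φ : PAssign) (C : Clause) : Decidable (csat φ C) := by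
  unfold csat; exact inferInstance

/-- Application φ * F of a partial assignment to a clause-set. -/
def papply (φ : PAssign) (F : ClauseSet) : ClauseSet :=
  (F.filter (fun C => ¬ csat φ C)).image (papplyC φ)

/-- The partial assignment setting precisely the pure literals of F to false. -/
def pureFalse (F : ClauseSet) : PAssign := fun v =>
  if ((v, true) : Lit) ∈ pureC F then some false
  else if ((v, false) : Lit) ∈ pureC F then some true
  else none

/-- Doping: add a fresh positive variable `u C` to every clause C. -/
def dope (u : Clause → ℕ) (F : ClauseSet) : ClauseSet :=
  F.image (fun C => insert ((u C, true) : Lit) C)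

/-- The doping variables are fresh and pairwise distinct. -/
def freshDoping (u : Clause → ℕ) (F : ClauseSet) : Prop :=
  (∀ C ∈ F, u C ∉ vars F) ∧ Set.InjOn u ↑F

/-- Resolution trees: axioms at leaves, resolution steps at inner nodes
(with the designated resolution literal). -/
inductive ResTree where
  | ax : Clause → ResTree
  | res : Lit → ResTree → ResTree → ResTree

/-- Conclusion clause of a resolution tree. -/
def ResTree.concl : ResTree → Clause
  | .ax C => C
  | .res x T1 T2 => (T1.concl ∪ T2.concl) \ {x, Lit.comp x}

/-- Validity: at each step the two parents clash in exactly the resolution literal. -/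
def ResTree.valid : ResTree → Prop
  | .ax _ => True
  | .res x T1 T2 => T1.valid ∧ T2.valid ∧ T1.concl ∩ Clause.compl T2.concl = {x}

/-- Axioms (leaf clauses) of a resolution tree. -/
def ResTree.axioms : ResTree → ClauseSet
  | .ax C => {C}
  | .res _ T1 T2 => T1.axioms ∪ T2.axioms

/-- Horton-Strahler number of a resolution tree. -/
def ResTree.hts : ResTree → ℕ
  | .ax _ => 0
  | .res _ T1 T2 => if T1.hts = T2.hts then T1.hts + 1 else max T1.hts T2.hts

/-- Regularity: no resolution variable repeated on a root-to-leaf path. -/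
def ResTree.regAux : ResTree → Finset ℕ → Prop
  | .ax _, _ => True
  | .res x T1 T2, S => x.1 ∉ S ∧ T1.regAux (insert x.1 S) ∧ T2.regAux (insert x.1 S)

def ResTree.regular (T : ResTree) : Prop := T.regAux ∅

/-- k-resolution: each step has a parent clause of length at most k. -/
def ResTree.kres (k : ℕ) : ResTree → Prop
  | .ax _ => True
  | .res _ T1 T2 => (T1.concl.card ≤ k ∨ T2.concl.card ≤ k) ∧ T1.kres k ∧ T2.kres k

/-- F has a resolution refutation of Horton-Strahler number at most k. -/
def refutesLe (F : ClauseSet) (k : ℕ) : Prop :=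
  ∃ T : ResTree, T.valid ∧ T.axioms ⊆ F ∧ T.concl = ∅ ∧ T.hts ≤ k

/-- Hardness at most k: every unsatisfiable instantiation has a refutation of
Horton-Strahler number at most k. -/
def hdLe (F : ClauseSet) (k : ℕ) : Prop :=
  ∀ φ : PAssign, unsat (papply φ F) → refutesLe (papply φ F) k

/-- Hardness. -/
noncomputable def hd (F : ClauseSet) : ℕ := sInf {k | hdLe F k}

/-- F has a k-resolution refutation. -/
def kresRefutes (F : ClauseSet) (k : ℕ) : Prop :=
  ∃ T : ResTree, T.valid ∧ T.axioms ⊆ F ∧ T.concl = ∅ ∧ ResTree.kres k T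

/-- Asymmetric width-hardness at most k. -/
def whdLe (F : ClauseSet) (k : ℕ) : Prop :=
  ∀ φ : PAssign, unsat (papply φ F) → kresRefutes (papply φ F) k

/-- Hyperedge E^k_C of the trigger hypergraph of F. -/
def Ek (F : ClauseSet) (k : ℕ) (C : Clause) : Set Clause :=
  {C' | primeImp F C' ∧ C' ∩ Clause.compl C = ∅ ∧ (C' \ C).card ≤ k}

section Aux
open Finset

lemma comp_comp (x : Lit) : Lit.comp (Lit.comp x) = x := by
  simp [Lit.comp]

lemma comp_fst (x : Lit) : (Lit.comp x).1 = x.1 := rfl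

lemma comp_ne (x : Lit) : Lit.comp x ≠ x := by
  simp [Lit.comp, Prod.ext_iff]

lemma mem_compl {C : Clause} {y : Lit} : y ∈ Clause.compl C ↔ Lit.comp y ∈ C := by
  constructor
  · intro h
    rcases Finset.mem_image.1 h with ⟨x, hx, rfl⟩
    rwa [comp_comp]
  · intro h
    exact Finset.mem_image.2 ⟨_, h, comp_comp y⟩

lemma mem_vars {F : ClauseSet} {C : Clause} {x : Lit} (hC : C ∈ F) (hx : x ∈ C) :
    x.1 ∈ vars F :=
  Finset.le_sup (f := varsC) hC (Finset.mem_image.2 ⟨x, hx, rfl⟩)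

lemma mem_papply {φ : PAssign} {F : ClauseSet} {D : Clause} :
    D ∈ papply φ F ↔ ∃ C ∈ F, ¬ csat φ C ∧ papplyC φ C = D := by
  unfold papply
  simp only [Finset.mem_image, Finset.mem_filter]
  constructor
  · rintro ⟨C, ⟨h1, h2⟩, h3⟩; exact ⟨C, h1, h2, h3⟩
  · rintro ⟨C, h1, h2, h3⟩; exact ⟨C, ⟨h1, h2⟩, h3⟩

lemma papplyC_subset (φ : PAssign) (C : Clause) : papplyC φ C ⊆ C :=
  Finset.filter_subset _ _

lemma eval_congr {a a' : ℕ → Bool} (x : Lit) (h : a x.1 = a' x.1) :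
    Lit.eval a x = Lit.eval a' x := by
  simp [Lit.eval, h]

/-- Override a total assignment by a partial one. -/
def override (φ : PAssign) (a : ℕ → Bool) : ℕ → Bool := fun v => (φ v).getD (a v)

lemma sat_override {φ : PAssign} {a : ℕ → Bool} {F : ClauseSet}
    (h : satisfies a (papply φ F)) : satisfies (override φ a) F := by
  intro C hC
  by_cases hs : csat φ C
  · obtain ⟨x, hx, hv⟩ := hs
    refine ⟨x, hx, ?_⟩
    unfold Lit.pval at hv
    cases hφ : φ x.1 with
    | none => simp [hφ] at hv
    | some c =>
      simp only [hφ, Option.map_some, Option.some.injEq] at hv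
      simpa [Lit.eval, override, hφ] using hv
  · have hmem : papplyC φ C ∈ papply φ F := mem_papply.2 ⟨C, hC, hs, rfl⟩
    obtain ⟨x, hx, hv⟩ := h _ hmem
    have hxC : x ∈ C := (Finset.mem_filter.1 hx).1
    have hnf : Lit.pval φ x ≠ some false := (Finset.mem_filter.1 hx).2
    refine ⟨x, hxC, ?_⟩
    unfold Lit.pval at hnf
    cases hφ : φ x.1 with
    | none =>
      have : override φ a x.1 = a x.1 := by simp [override, hφ]
      rw [eval_congr x this]; exact hv
    | some c =>
      simp only [hφ, Option.map_some, ne_eq, Option.some.injEq] at hnf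
      have : (if x.2 then c else !c) = true := by
        cases hb : (if x.2 then c else !c) with
        | false => exact absurd hb hnf
        | true => rfl
      simpa [Lit.eval, override, hφ] using this

lemma unsat_papply {φ : PAssign} {F : ClauseSet} (h : unsat F) : unsat (papply φ F) := by
  rintro ⟨a, ha⟩
  exact h ⟨override φ a, sat_override ha⟩

lemma mem_vars_iff {F : ClauseSet} {v : ℕ} :
    v ∈ vars F ↔ ∃ C ∈ F, ∃ x ∈ C, x.1 = v := by
  unfold vars varsC
  simp [Finset.mem_sup, Finset.mem_image]

lemma vars_papply (φ : PAssign) (F : ClauseSet) : vars (papply φ F) ⊆ vars F := by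
  intro v hv
  rcases mem_vars_iff.1 hv with ⟨D, hD, x, hx, rfl⟩
  rcases mem_papply.1 hD with ⟨C, hC, _, rfl⟩
  exact mem_vars hC (papplyC_subset φ C hx)

end Aux
section Trees
open Finset

/-- Literals don't occur in the conclusion if they don't occur in the axioms. -/
lemma not_mem_concl (l : Lit) : ∀ T : ResTree, (∀ C ∈ T.axioms, l ∉ C) → l ∉ T.concl := by
  intro T
  induction T with
  | ax C => intro h; exact h C (Finset.mem_singleton_self _)
  | res x T1 T2 ih1 ih2 =>
    intro h hmem
    have h' := Finset.mem_sdiff.1 hmem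
    rcases Finset.mem_union.1 h'.1 with h1 | h1
    · exact ih1 (fun C hC => h C (Finset.mem_union_left _ hC)) h1
    · exact ih2 (fun C hC => h C (Finset.mem_union_right _ hC)) h1

/-- Lifting a resolution tree over clauses weakened by one extra literal. -/
lemma lift_tree (l₀ : Lit) (G : ClauseSet) :
    ∀ T : ResTree, T.valid →
    (∀ C' ∈ T.axioms, l₀ ∉ C' ∧ Lit.comp l₀ ∉ C' ∧ (C' ∈ G ∨ insert l₀ C' ∈ G)) →
    ∃ T' : ResTree, T'.valid ∧ T'.axioms ⊆ G ∧
      T.concl ⊆ T'.concl ∧ T'.concl ⊆ insert l₀ T.concl ∧ T'.hts = T.hts := by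
  intro T
  induction T with
  | ax C =>
    intro _ h
    obtain ⟨h1, h2, h3 | h3⟩ := h C (Finset.mem_singleton_self _)
    · exact ⟨ResTree.ax C, trivial, by simpa [ResTree.axioms] using h3,
        Finset.Subset.refl _, Finset.subset_insert _ _, rfl⟩
    · exact ⟨ResTree.ax (insert l₀ C), trivial, by simpa [ResTree.axioms] using h3,
        Finset.subset_insert _ _, Finset.Subset.refl _, rfl⟩
  | res x T1 T2 ih1 ih2 =>
    intro hval h
    obtain ⟨v1, v2, hint⟩ := hval
    have hax1 : ∀ C ∈ T1.axioms, l₀ ∉ C ∧ Lit.comp l₀ ∉ C ∧ (C ∈ G ∨ insert l₀ C ∈ G) :=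
      fun C hC => h C (Finset.mem_union_left _ hC)
    have hax2 : ∀ C ∈ T2.axioms, l₀ ∉ C ∧ Lit.comp l₀ ∉ C ∧ (C ∈ G ∨ insert l₀ C ∈ G) :=
      fun C hC => h C (Finset.mem_union_right _ hC)
    obtain ⟨T1', w1, a1, c1l, c1u, h1⟩ := ih1 v1 hax1
    obtain ⟨T2', w2, a2, c2l, c2u, h2⟩ := ih2 v2 hax2
    have hl1 : l₀ ∉ T1.concl := not_mem_concl l₀ T1 (fun C hC => (hax1 C hC).1)
    have hcl1 : Lit.comp l₀ ∉ T1.concl := not_mem_concl _ T1 (fun C hC => (hax1 C hC).2.1)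
    have hl2 : l₀ ∉ T2.concl := not_mem_concl l₀ T2 (fun C hC => (hax2 C hC).1)
    have hcl2 : Lit.comp l₀ ∉ T2.concl := not_mem_concl _ T2 (fun C hC => (hax2 C hC).2.1)
    have hx1 : x ∈ T1.concl := by
      have : x ∈ T1.concl ∩ Clause.compl T2.concl := by rw [hint]; exact Finset.mem_singleton_self x
      exact (Finset.mem_inter.1 this).1
    have hx2 : x ∈ Clause.compl T2.concl := by
      have : x ∈ T1.concl ∩ Clause.compl T2.concl := by rw [hint]; exact Finset.mem_singleton_self x
      exact (Finset.mem_inter.1 this).2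
    have hxl : x ≠ l₀ := fun he => hl1 (he ▸ hx1)
    have hxcl : x ≠ Lit.comp l₀ := fun he => hcl1 (he ▸ hx1)
    have hcxl : Lit.comp x ≠ l₀ := by
      intro he
      apply hxcl
      rw [← he, comp_comp]
    refine ⟨ResTree.res x T1' T2', ⟨w1, w2, ?_⟩, ?_, ?_, ?_, ?_⟩
    · -- validity of the intersection
      apply Finset.ext
      intro y
      simp only [Finset.mem_inter, Finset.mem_singleton]
      constructor
      · rintro ⟨hy1, hy2⟩
        have hy1' : y ∈ insert l₀ T1.concl := c1u hy1
        have hy2' : Lit.comp y ∈ insert l₀ T2.concl := c2u (mem_compl.1 hy2)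
        rcases Finset.mem_insert.1 hy1' with rfl | hy1''
        · exfalso
          rcases Finset.mem_insert.1 hy2' with he | hm
          · exact comp_ne _ he
          · exact hcl2 hm
        · rcases Finset.mem_insert.1 hy2' with he | hm
          · exfalso
            apply hcl1
            rw [← comp_comp y, he] at hy1''
            exact hy1''
          · have : y ∈ T1.concl ∩ Clause.compl T2.concl :=
              Finset.mem_inter.2 ⟨hy1'', mem_compl.2 hm⟩
            rw [hint] at this
            exact Finset.mem_singleton.1 this
      · rintro rfl
        exact ⟨c1l hx1, mem_compl.2 (c2l (mem_compl.1 hx2))⟩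
    · -- axioms
      intro C hC
      rcases Finset.mem_union.1 hC with hC | hC
      · exact a1 hC
      · exact a2 hC
    · -- lower conclusion bound
      intro y hy
      obtain ⟨hy1, hy2⟩ := Finset.mem_sdiff.1 hy
      refine Finset.mem_sdiff.2 ⟨?_, hy2⟩
      rcases Finset.mem_union.1 hy1 with hm | hm
      · exact Finset.mem_union_left _ (c1l hm)
      · exact Finset.mem_union_right _ (c2l hm)
    · -- upper conclusion bound
      intro y hy
      obtain ⟨hy1, hy2⟩ := Finset.mem_sdiff.1 hy
      rcases Finset.mem_union.1 hy1 with hm | hm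
      · rcases Finset.mem_insert.1 (c1u hm) with rfl | hm'
        · exact Finset.mem_insert_self _ _
        · exact Finset.mem_insert_of_mem
            (Finset.mem_sdiff.2 ⟨Finset.mem_union_left _ hm', hy2⟩)
      · rcases Finset.mem_insert.1 (c2u hm) with rfl | hm'
        · exact Finset.mem_insert_self _ _
        · exact Finset.mem_insert_of_mem
            (Finset.mem_sdiff.2 ⟨Finset.mem_union_right _ hm', hy2⟩)
    · -- hts
      simp [ResTree.hts, h1, h2]

end Trees
section Split
open Finset

/-- The partial assignment setting exactly `v` to `b`. -/
def onevar (v : ℕ) (b : Bool) : PAssign := fun w => if w = v then some b else none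

lemma pval_onevar (v : ℕ) (b : Bool) (x : Lit) :
    Lit.pval (onevar v b) x = if x.1 = v then some (if x.2 then b else !b) else none := by
  unfold Lit.pval onevar
  split <;> simp_all

lemma v_not_mem_vars_papply (v : ℕ) (b : Bool) (F : ClauseSet) :
    v ∉ vars (papply (onevar v b) F) := by
  intro hv
  rcases mem_vars_iff.1 hv with ⟨D, hD, x, hx, hx1⟩
  rcases mem_papply.1 hD with ⟨C, hC, hns, rfl⟩
  have hxC : x ∈ C := papplyC_subset _ _ hx
  have hnf : Lit.pval (onevar v b) x ≠ some false := (Finset.mem_filter.1 hx).2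
  rw [pval_onevar, if_pos hx1] at hnf
  have : (if x.2 then b else !b) = true := by
    cases hb : (if x.2 then b else !b) with
    | false => exact absurd (by rw [hb]) hnf
    | true => rfl
  exact hns ⟨x, hxC, by rw [pval_onevar, if_pos hx1, this]⟩

lemma papplyC_onevar {v : ℕ} {b : Bool} {C : Clause} (h : ¬ csat (onevar v b) C) :
    papplyC (onevar v b) C = C.erase (v, !b) := by
  have hvb : ((v, b) : Lit) ∉ C := by
    intro hm
    exact h ⟨(v, b), hm, by simp [pval_onevar]⟩
  apply Finset.ext
  intro x
  simp only [papplyC, Finset.mem_filter, Finset.mem_erase]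
  constructor
  · rintro ⟨hxC, hnf⟩
    refine ⟨?_, hxC⟩
    rintro rfl
    rw [pval_onevar] at hnf
    cases b <;> simp_all
  · rintro ⟨hne, hxC⟩
    refine ⟨hxC, ?_⟩
    rw [pval_onevar]
    by_cases h1 : x.1 = v
    · rw [if_pos h1]
      exfalso
      obtain ⟨x1, x2⟩ := x
      simp only at h1
      subst h1
      by_cases hb : x2 = b
      · subst hb; exact hvb hxC
      · apply hne
        have h2 : x2 = !b := by cases x2 <;> cases b <;> simp_all
        rw [h2]
    · rw [if_neg h1]; simp

lemma empty_of_unsat_novars {H : ClauseSet} (hU : unsat H) (hv : vars H = ∅) : ∅ ∈ H := by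
  by_contra hne
  apply hU
  refine ⟨fun _ => true, fun C hC => ?_⟩
  exfalso
  apply hne
  have : C = ∅ := by
    apply Finset.eq_empty_of_forall_notMem
    intro x hx
    have := mem_vars hC hx
    rw [hv] at this
    exact absurd this (Finset.notMem_empty _)
  rwa [this] at hC

lemma refute_of_unsat : ∀ n (H : ClauseSet), unsat H → (vars H).card ≤ n →
    ∃ T : ResTree, T.valid ∧ T.axioms ⊆ H ∧ T.concl = ∅ ∧ T.hts ≤ n := by
  intro n
  induction n with
  | zero =>
    intro H hU hc
    have hv : vars H = ∅ := Finset.card_eq_zero.1 (Nat.le_zero.1 hc)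
    exact ⟨ResTree.ax ∅, trivial,
      by simpa [ResTree.axioms] using empty_of_unsat_novars hU hv,
      rfl, le_refl _⟩
  | succ n ih =>
    intro H hU hc
    by_cases hE : (∅ : Clause) ∈ H
    · exact ⟨ResTree.ax ∅, trivial, by simpa [ResTree.axioms] using hE, rfl, Nat.zero_le _⟩
    by_cases hv0 : vars H = ∅
    · exact absurd (empty_of_unsat_novars hU hv0) hE
    obtain ⟨v, hv⟩ := Finset.nonempty_of_ne_empty hv0
    -- build lifted refutations for both values of v
    have main : ∀ b : Bool, ∃ T' : ResTree, T'.valid ∧ T'.axioms ⊆ H ∧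
        T'.concl ⊆ {((v, !b) : Lit)} ∧ T'.hts ≤ n := by
      intro b
      have hUb : unsat (papply (onevar v b) H) := unsat_papply hU
      have hsub : vars (papply (onevar v b) H) ⊆ (vars H).erase v := by
        intro w hw
        exact Finset.mem_erase.2 ⟨fun he => v_not_mem_vars_papply v b H (he ▸ hw),
          vars_papply _ _ hw⟩
      have hcard : (vars (papply (onevar v b) H)).card ≤ n := by
        have h1 := Finset.card_le_card hsub
        have h2 := Finset.card_erase_of_mem hv
        omega
      obtain ⟨T, hTv, hTa, hTc, hTh⟩ := ih (papply (onevar v b) H) hUb hcard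
      have hhyp : ∀ C' ∈ T.axioms, ((v, !b) : Lit) ∉ C' ∧ Lit.comp (v, !b) ∉ C' ∧
          (C' ∈ H ∨ insert ((v, !b) : Lit) C' ∈ H) := by
        intro C' hC'
        have hC'b := hTa hC'
        have hnv : ∀ x : Lit, x ∈ C' → x.1 ≠ v := by
          intro x hx he
          have hmv := mem_vars hC'b hx
          rw [he] at hmv
          exact v_not_mem_vars_papply v b H hmv
        refine ⟨fun hm => hnv _ hm rfl, fun hm => hnv _ hm rfl, ?_⟩
        rcases mem_papply.1 hC'b with ⟨C, hC, hns, rfl⟩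
        rw [papplyC_onevar hns]
        by_cases hm : ((v, !b) : Lit) ∈ C
        · right; rw [Finset.insert_erase hm]; exact hC
        · left; rw [Finset.erase_eq_of_notMem hm]; exact hC
      obtain ⟨T', w', a', cl', cu', h'⟩ := lift_tree ((v, !b) : Lit) H T hTv hhyp
      refine ⟨T', w', a', ?_, by omega⟩
      rw [hTc] at cu'
      simpa using cu'
    obtain ⟨Tt, wt, at_, ct, ht⟩ := main true
    obtain ⟨Tf, wf, af, cf, hf⟩ := main false
    by_cases het : Tt.concl = ∅
    · exact ⟨Tt, wt, at_, het, by omega⟩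
    by_cases hef : Tf.concl = ∅
    · exact ⟨Tf, wf, af, hef, by omega⟩
    have hct : Tt.concl = {((v, false) : Lit)} := by
      rcases Finset.subset_singleton_iff.1 ct with h | h
      · exact absurd h het
      · simpa using h
    have hcf : Tf.concl = {((v, true) : Lit)} := by
      rcases Finset.subset_singleton_iff.1 cf with h | h
      · exact absurd h hef
      · simpa using h
    refine ⟨ResTree.res ((v, true) : Lit) Tf Tt, ⟨wf, wt, ?_⟩, ?_, ?_, ?_⟩
    · rw [hcf, hct]
      apply Finset.ext
      intro y
      simp [Clause.compl, Lit.comp]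
    · intro C hC
      rcases Finset.mem_union.1 hC with h | h
      · exact af h
      · exact at_ h
    · show (Tf.concl ∪ Tt.concl) \ {((v,true) : Lit), Lit.comp (v, true)} = ∅
      rw [hcf, hct]
      apply Finset.eq_empty_of_forall_notMem
      intro y hy
      obtain ⟨h1, h2⟩ := Finset.mem_sdiff.1 hy
      rcases Finset.mem_union.1 h1 with h | h
      · have hy' : y = ((v, true) : Lit) := Finset.mem_singleton.1 h
        exact h2 (by rw [hy']; exact Finset.mem_insert_self _ _)
      · apply h2
        have : y = ((v, false) : Lit) := Finset.mem_singleton.1 h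
        rw [this]
        show ((v, false) : Lit) ∈ ({((v,true) : Lit), Lit.comp (v, true)} : Clause)
        have : Lit.comp (v, true) = ((v, false) : Lit) := rfl
        rw [this]
        exact Finset.mem_insert_of_mem (Finset.mem_singleton_self _)
    · show ResTree.hts (ResTree.res ((v, true) : Lit) Tf Tt) ≤ n + 1
      simp only [ResTree.hts]
      split <;> omega

end Split
section Main
open Finset

lemma refutesLe_mono {F : ClauseSet} {j k : ℕ} (h : refutesLe F j) (hjk : j ≤ k) :
    refutesLe F k := by
  obtain ⟨T, a, b, c, d⟩ := h
  exact ⟨T, a, b, c, le_trans d hjk⟩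

lemma hdLe_mono {F : ClauseSet} {j k : ℕ} (h : hdLe F j) (hjk : j ≤ k) : hdLe F k :=
  fun φ hU => refutesLe_mono (h φ hU) hjk

lemma hdLe_vars (F : ClauseSet) : hdLe F ((vars F).card) := fun φ hU =>
  refute_of_unsat _ _ hU (Finset.card_le_card (vars_papply φ F))

lemma hdLe_hd (F : ClauseSet) : hdLe F (hd F) :=
  Nat.sInf_mem (⟨_, hdLe_vars F⟩ : {k | hdLe F k}.Nonempty)

lemma hd_le {F : ClauseSet} {k : ℕ} (h : hdLe F k) : hd F ≤ k := Nat.sInf_le h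

lemma pval_of_true (ψ : PAssign) (w : ℕ) : Lit.pval ψ ((w, true) : Lit) = ψ w := by
  unfold Lit.pval
  cases ψ w <;> simp

/-- The extension of φ to the doping variables. -/
def dopeAssign (u : Clause → ℕ) (F F' : ClauseSet) (φ : PAssign) : PAssign := fun v =>
  if (F'.filter (fun C => u C = v)).Nonempty then some false
  else if (F.filter (fun C => u C = v)).Nonempty then some true
  else φ v

lemma hdLe_sub_of_dope {F : ClauseSet} {u : Clause → ℕ} (hu : freshDoping u F) {k : ℕ}
    (h : hdLe (dope u F) k) {F' : ClauseSet} (hF' : F' ⊆ F) : hdLe F' k := by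
  intro φ hU
  set φ' : PAssign := dopeAssign u F F' φ with hφ'def
  have ha : ∀ C ∈ F, φ' (u C) = if C ∈ F' then some false else some true := by
    intro C hC
    by_cases hm : C ∈ F'
    · rw [if_pos hm]
      have hne : (F'.filter (fun C' => u C' = u C)).Nonempty :=
        ⟨C, Finset.mem_filter.2 ⟨hm, rfl⟩⟩
      simp only [hφ'def, dopeAssign, if_pos hne]
    · rw [if_neg hm]
      have h1 : ¬ (F'.filter (fun C' => u C' = u C)).Nonempty := by
        rintro ⟨C0, hC0⟩
        obtain ⟨hC0', he⟩ := Finset.mem_filter.1 hC0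
        have : C0 = C := hu.2 (Finset.mem_coe.2 (hF' hC0')) (Finset.mem_coe.2 hC) he
        exact hm (this ▸ hC0')
      have h2 : (F.filter (fun C' => u C' = u C)).Nonempty :=
        ⟨C, Finset.mem_filter.2 ⟨hC, rfl⟩⟩
      simp only [hφ'def, dopeAssign, if_neg h1, if_pos h2]
  have hb : ∀ v ∈ vars F, φ' v = φ v := by
    intro v hvF
    have h1 : ¬ (F'.filter (fun C => u C = v)).Nonempty := by
      rintro ⟨C0, hC0⟩
      obtain ⟨hC0', he⟩ := Finset.mem_filter.1 hC0
      exact hu.1 C0 (hF' hC0') (by rw [he]; exact hvF)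
    have h2 : ¬ (F.filter (fun C => u C = v)).Nonempty := by
      rintro ⟨C0, hC0⟩
      obtain ⟨hC0', he⟩ := Finset.mem_filter.1 hC0
      exact hu.1 C0 hC0' (by rw [he]; exact hvF)
    simp only [hφ'def, dopeAssign, if_neg h1, if_neg h2]
  have hpv : ∀ x : Lit, x.1 ∈ vars F → Lit.pval φ' x = Lit.pval φ x := by
    intro x hx
    unfold Lit.pval
    rw [hb _ hx]
  have hcs : ∀ C ∈ F, (csat φ' C ↔ csat φ C) := by
    intro C hC
    constructor
    · rintro ⟨x, hx, hv⟩
      exact ⟨x, hx, by rw [← hpv x (mem_vars hC hx)]; exact hv⟩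
    · rintro ⟨x, hx, hv⟩
      exact ⟨x, hx, by rw [hpv x (mem_vars hC hx)]; exact hv⟩
  have hpc : ∀ C ∈ F, papplyC φ' C = papplyC φ C := by
    intro C hC
    unfold papplyC
    apply Finset.filter_congr
    intro x hx
    rw [hpv x (mem_vars hC hx)]
  have he : papply φ' (dope u F) = papply φ F' := by
    apply Finset.ext
    intro D
    rw [mem_papply, mem_papply]
    constructor
    · rintro ⟨E, hE, hns, rfl⟩
      rcases Finset.mem_image.1 hE with ⟨C, hC, rfl⟩
      by_cases hm : C ∈ F'
      · have hfalse : Lit.pval φ' ((u C, true) : Lit) = some false := by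
          rw [pval_of_true, ha C hC, if_pos hm]
        have hns' : ¬ csat φ' C := by
          rintro ⟨x, hx, hv⟩
          exact hns ⟨x, Finset.mem_insert_of_mem hx, hv⟩
        have hstep : papplyC φ' (insert ((u C, true) : Lit) C) = papplyC φ' C := by
          unfold papplyC
          rw [Finset.filter_insert, if_neg (by simp [hfalse])]
        exact ⟨C, hm, fun hcc => hns' ((hcs C hC).2 hcc), by rw [hstep, hpc C hC]⟩
      · exfalso
        apply hns
        refine ⟨((u C, true) : Lit), Finset.mem_insert_self _ _, ?_⟩
        rw [pval_of_true, ha C hC, if_neg hm]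
    · rintro ⟨C, hm, hns, rfl⟩
      have hC : C ∈ F := hF' hm
      have hfalse : Lit.pval φ' ((u C, true) : Lit) = some false := by
        rw [pval_of_true, ha C hC, if_pos hm]
      refine ⟨insert ((u C, true) : Lit) C, Finset.mem_image.2 ⟨C, hC, rfl⟩, ?_, ?_⟩
      · rintro ⟨x, hx, hv⟩
        rcases Finset.mem_insert.1 hx with rfl | hx'
        · rw [hfalse] at hv
          exact absurd hv (by simp)
        · exact hns ((hcs C hC).1 ⟨x, hx', hv⟩)
      · have hstep : papplyC φ' (insert ((u C, true) : Lit) C) = papplyC φ' C := by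
          unfold papplyC
          rw [Finset.filter_insert, if_neg (by simp [hfalse])]
        rw [hstep, hpc C hC]
  have hU' : unsat (papply φ' (dope u F)) := by rw [he]; exact hU
  have hres := h φ' hU'
  rwa [he] at hres

lemma hdLe_dope_of_sub {F : ClauseSet} {u : Clause → ℕ} (hu : freshDoping u F) {k : ℕ}
    (h : ∀ F' ⊆ F, hdLe F' k) : hdLe (dope u F) k := by
  intro ψ hU
  set F' : ClauseSet := F.filter (fun C => ψ (u C) = some false) with hF'def
  have hF' : F' ⊆ F := Finset.filter_subset _ _
  have hsub : papply ψ F' ⊆ papply ψ (dope u F) := by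
    intro D hD
    rcases mem_papply.1 hD with ⟨C, hC, hns, rfl⟩
    have hCF : C ∈ F := hF' hC
    have hψ : ψ (u C) = some false := (Finset.mem_filter.1 hC).2
    refine mem_papply.2 ⟨insert ((u C, true) : Lit) C,
      Finset.mem_image.2 ⟨C, hCF, rfl⟩, ?_, ?_⟩
    · rintro ⟨x, hx, hv⟩
      rcases Finset.mem_insert.1 hx with rfl | hx'
      · rw [pval_of_true, hψ] at hv
        exact absurd hv (by simp)
      · exact hns ⟨x, hx', hv⟩
    · unfold papplyC
      rw [Finset.filter_insert, if_neg (by simp [pval_of_true, hψ])]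
  have hU' : unsat (papply ψ F') := by
    rintro ⟨a, ha⟩
    apply hU
    refine ⟨fun v => if (F.filter (fun C => u C = v)).Nonempty then true else a v, ?_⟩
    intro D hD
    rcases mem_papply.1 hD with ⟨E, hE, hns, rfl⟩
    rcases Finset.mem_image.1 hE with ⟨C, hC, rfl⟩
    cases hψC : ψ (u C) with
    | some bb =>
      cases bb with
      | true =>
        exfalso
        exact hns ⟨_, Finset.mem_insert_self _ _, by rw [pval_of_true, hψC]⟩
      | false =>
        have hCF' : C ∈ F' := Finset.mem_filter.2 ⟨hC, hψC⟩
        have hns' : ¬ csat ψ C := by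
          rintro ⟨x, hx, hv⟩
          exact hns ⟨x, Finset.mem_insert_of_mem hx, hv⟩
        have hstep : papplyC ψ (insert ((u C, true) : Lit) C) = papplyC ψ C := by
          unfold papplyC
          rw [Finset.filter_insert, if_neg (by simp [pval_of_true, hψC])]
        obtain ⟨x, hx, hv⟩ := ha _ (mem_papply.2 ⟨C, hCF', hns', rfl⟩)
        refine ⟨x, by rw [hstep]; exact hx, ?_⟩
        have hxC : x ∈ C := papplyC_subset _ _ hx
        have hxv : x.1 ∈ vars F := mem_vars hC hxC
        have hne : ¬ (F.filter (fun C0 => u C0 = x.1)).Nonempty := by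
          rintro ⟨C0, hC0⟩
          obtain ⟨hC0F, he⟩ := Finset.mem_filter.1 hC0
          exact hu.1 C0 hC0F (by rw [he]; exact hxv)
        simpa [Lit.eval, hne] using hv
    | none =>
      refine ⟨((u C, true) : Lit), ?_, ?_⟩
      · exact Finset.mem_filter.2 ⟨Finset.mem_insert_self _ _, by simp [pval_of_true, hψC]⟩
      · have hne2 : (F.filter (fun C0 => u C0 = u C)).Nonempty :=
          ⟨C, Finset.mem_filter.2 ⟨hC, rfl⟩⟩
        simp [Lit.eval, hne2]
  obtain ⟨T, ta, tb, tc, td⟩ := h F' hF' ψ hU'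
  exact ⟨T, ta, fun C hC => hsub (tb hC), tc, td⟩

end Main

/-- The hardness of the doped clause-set equals the maximal hardness over all subsets:
hd(D(F)) = max_{F' ⊆ F} hd(F'). -/
theorem hd_dope_eq_sup (F : ClauseSet) (u : Clause → ℕ) (hu : freshDoping u F) :
    hd (dope u F) = F.powerset.sup hd := by
  apply le_antisymm
  · apply hd_le
    apply hdLe_dope_of_sub hu
    intro F' hF'
    exact hdLe_mono (hdLe_hd F') (Finset.le_sup (Finset.mem_powerset.2 hF'))
  · apply Finset.sup_le
    intro F' hF'
    exact hd_le (hdLe_sub_of_dope hu (hdLe_hd (dope u F)) (Finset.mem_powerset.1 hF'))
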